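/- The measures M_{α,n} on strict partitions of weight n, defined via Kerov operators by M_{α,n}(λ) = (1/Z_n)(Û^n δ_∅, δ_λ)(D̂^n δ_λ, δ_∅) with Z_n = n!(α/2)_n, form a coherent system: for every n ≥ 0 and every strict partition λ of weight n, M_n(λ) = Σ_{κ: κ↘λ} M_{n+1}(κ) · dim_S(λ)/dim_S(κ). -/

import Mathlib

open scoped BigOperators

/-- A strict partition: a strictly decreasing list of positive integers. -/
def SPart : Type := {l : List ℕ // l.Pairwise (· > ·) ∧ ∀ x ∈ l, 0 < x}

namespace SPart

/-- The weight `|λ|`: the sum of the parts. -/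
def weight (lam : SPart) : ℕ := lam.1.sum

/-- The shifted Young diagram of a strict partition: row `k` (1-indexed) has
`λ_k` boxes `(k, j)` with `k ≤ j < k + λ_k`. -/
def diagram (lam : SPart) : Set (ℕ × ℕ) :=
  {p | ∃ k : Fin lam.1.length,
    p.1 = (k : ℕ) + 1 ∧ (k : ℕ) + 1 ≤ p.2 ∧ p.2 < (k : ℕ) + 1 + lam.1.get k}

/-- `AddBox μ λ b`: the shifted diagram of `λ` is obtained from that of `μ` by
adding the single box `b`. -/
def AddBox (mu lam : SPart) (b : ℕ × ℕ) : Prop :=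
  b ∉ mu.diagram ∧ lam.diagram = insert b mu.diagram

/-- `Covers μ λ`: `λ` is obtained from `μ` by adding one box (an edge `μ ↗ λ`
of the Schur graph). -/
def Covers (mu lam : SPart) : Prop := ∃ b, AddBox mu lam b

/-- The empty strict partition. -/
def empty : SPart := ⟨[], List.Pairwise.nil, by simp⟩

end SPart

open Classical

/-- The modified Kerov raising operator `Û`:
`Û·δ_λ = Σ_{κ ↘ λ} 2^{−δ(j−i)}((j−i)(j−i+1)+α)·δ_κ` where `(i,j) = κ/λ`. -/
noncomputable def UhatOp (α : ℂ) (f : SPart → ℂ) : SPart → ℂ := fun kap =>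
  ∑ᶠ p ∈ {p : SPart × (ℕ × ℕ) | SPart.AddBox p.1 kap p.2},
    ((if p.2.2 = p.2.1 then (2 : ℂ)⁻¹ else 1) *
      (((p.2.2 : ℂ) - (p.2.1 : ℂ)) * (((p.2.2 : ℂ) - (p.2.1 : ℂ)) + 1) + α)) * f p.1

/-- The modified Kerov lowering operator `D̂`: `D̂·δ_λ = Σ_{μ ↗ λ} δ_μ`. -/
noncomputable def DhatOp (f : SPart → ℂ) : SPart → ℂ := fun mu =>
  ∑ᶠ p ∈ {p : SPart × (ℕ × ℕ) | SPart.AddBox mu p.1 p.2}, f p.1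

/-- The delta function `δ_λ`. -/
noncomputable def deltaAt (lam : SPart) : SPart → ℂ := fun mu => if mu = lam then 1 else 0

/-- `Z_n = n! (α/2)_n`. -/
noncomputable def Zconst (α : ℂ) (n : ℕ) : ℂ :=
  (Nat.factorial n : ℂ) * (ascPochhammer ℂ n).eval (α / 2)

/-- The measure `M_{α,n}(λ) = Z_n⁻¹ (Ûⁿ δ_∅, δ_λ)(D̂ⁿ δ_λ, δ_∅)`. -/
noncomputable def Mmeas (α : ℂ) (n : ℕ) (lam : SPart) : ℂ :=
  (Zconst α n)⁻¹ * ((UhatOp α)^[n] (deltaAt SPart.empty) lam) *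
    (DhatOp^[n] (deltaAt lam) SPart.empty)

/-!
A strict partition is encoded by its row lengths `λ_k` (`k ≥ 0`). A box added to row `k` of the
shifted diagram has content `λ_k`, a box removed from row `k` has content `λ_k - 1`, and adding
in row `k` commutes with removing in row `m ≠ k`. So in `D̂Û - ÛD̂` only the terms that add and
remove the same box survive, and they sum to
`∑_{k addable} w(λ_k) - ∑_{k removable} w(λ_k - 1) = 2|λ| + α/2` (a telescoping sum over the
rows), where `w` is the box weight of `Û`: this is `[D̂, Û] = H`. By induction,
`D̂ Ûⁿ⁺¹ δ_∅ = (n + 1)(n + α/2) Ûⁿ δ_∅ = (Z_{n+1} / Z_n) Ûⁿ δ_∅`, while the branching rule for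
`dim_S` gives `(D̂ⁿ δ_λ)(∅) = dim_S λ`. Hence
`∑_{κ ↘ λ} M_{n+1}(κ) dim_S λ / dim_S κ = Z_{n+1}⁻¹ dim_S λ (D̂ Ûⁿ⁺¹ δ_∅)(λ) = M_n(λ)`.
-/

open Finset in
lemma finsum_mem_setOf_eq_sum_range {M : Type*} [AddCommMonoid M] {P : ℕ → Prop} {N : ℕ}
    (hP : ∀ k, P k → k < N) (g : ℕ → M) :
    ∑ᶠ k ∈ {k | P k}, g k = ∑ k ∈ range N, if P k then g k else 0 := by
  have hset : {k | P k} = ↑((range N).filter P) := by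
    ext k
    simpa using fun hk => hP k hk
  rw [hset, finsum_mem_coe_finset, sum_filter]

open Finset in
lemma sum_sum_sub_sum_diag_eq_of_swap {ι M : Type*} [AddCommGroup M] (s : Finset ι)
    {g h : ι → ι → M} (hgh : ∀ i j, i ≠ j → g i j = h j i) :
    ∑ i ∈ s, ∑ j ∈ s, g i j - ∑ i ∈ s, g i i = ∑ i ∈ s, ∑ j ∈ s, h i j - ∑ i ∈ s, h i i := by
  have hrow : ∀ i ∈ s, ∑ j ∈ s, (g i j - h j i) = g i i - h i i := fun i hi =>
    sum_eq_single_of_mem i hi fun j _ hji => by rw [hgh i j hji.symm, sub_self]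
  have e : ∑ i ∈ s, ∑ j ∈ s, g i j - ∑ i ∈ s, ∑ j ∈ s, h j i = ∑ i ∈ s, g i i - ∑ i ∈ s, h i i := by
    rw [← sum_sub_distrib, ← sum_sub_distrib]
    exact sum_congr rfl fun i hi => by rw [← sum_sub_distrib, hrow i hi]
  rw [sum_comm (f := fun i j => h j i)] at e
  exact sub_eq_sub_iff_sub_eq_sub.1 e

namespace SPart

open Function Finset

section RowLengths

/-- The entry `λ_{k+1}` of a strict partition, read as `0` beyond its length. -/
def part (lam : SPart) (k : ℕ) : ℕ := lam.1.getD k 0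

lemma part_of_lt {lam : SPart} {k : ℕ} (h : k < lam.1.length) : lam.part k = lam.1[k] := by
  simp [part, List.getD_eq_getElem?_getD, h]

lemma part_of_length_le {lam : SPart} {k : ℕ} (h : lam.1.length ≤ k) : lam.part k = 0 := by
  simp [part, List.getD_eq_getElem?_getD, h]

lemma part_pos_iff {lam : SPart} {k : ℕ} : 0 < lam.part k ↔ k < lam.1.length := by
  refine ⟨fun h => ?_, fun h => ?_⟩
  · by_contra hk
    rw [part_of_length_le (not_lt.1 hk)] at h
    exact h.false
  · rw [part_of_lt h]
    exact lam.2.2 _ (List.getElem_mem h)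

lemma part_succ_lt {lam : SPart} {k : ℕ} (h : 0 < lam.part (k + 1)) :
    lam.part (k + 1) < lam.part k := by
  have hk : k + 1 < lam.1.length := part_pos_iff.1 h
  rw [part_of_lt hk, part_of_lt (by omega : k < lam.1.length)]
  exact List.pairwise_iff_getElem.1 lam.2.1 k (k + 1) (by omega) hk (by omega)

lemma part_injective : Injective part := by
  intro lam mu h
  have hlen : lam.1.length = mu.1.length := by
    by_contra hne
    rcases Nat.lt_or_gt_of_ne hne with hl | hl
    · have := part_pos_iff.2 hl
      rw [← h, part_of_length_le le_rfl] at this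
      exact this.false
    · have := part_pos_iff.2 hl
      rw [h, part_of_length_le le_rfl] at this
      exact this.false
  refine Subtype.ext (List.ext_getElem hlen fun i h1 h2 => ?_)
  rw [← part_of_lt h1, ← part_of_lt h2, h]

lemma exists_part_eq (q : ℕ → ℕ) (hq : ∀ k, 0 < q (k + 1) → q (k + 1) < q k)
    (hfin : ∃ k, q k = 0) : ∃ lam : SPart, lam.part = q := by
  set m := Nat.find hfin
  have hpos : ∀ k < m, 0 < q k := fun k hk => Nat.pos_of_ne_zero (Nat.find_min hfin hk)
  have hzero : ∀ k, m ≤ k → q k = 0 := by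
    intro k hk
    induction k, hk using Nat.le_induction with
    | base => exact Nat.find_spec hfin
    | succ k _ ih => by_contra h; have := hq k (Nat.pos_of_ne_zero h); omega
  have hchain : ((List.range m).map q).IsChain (· > ·) := by
    rw [List.isChain_map, List.isChain_range]
    exact fun j hj => hq j (hpos _ (by omega))
  refine ⟨⟨(List.range m).map q, hchain.pairwise, ?_⟩, funext fun k => ?_⟩
  · simp only [List.mem_map, List.mem_range]
    rintro _ ⟨k, hk, rfl⟩
    exact hpos k hk
  · by_cases hk : k < m
    · simp [part, List.getD_eq_getElem?_getD, hk]
    · simp [part, List.getD_eq_getElem?_getD, hk, hzero k (not_lt.1 hk)]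

end RowLengths

section Boxes

/- Rows are counted from `0`. In a shifted diagram row `k` may grow iff row `k - 1` stays strictly
longer, and may shrink iff row `k + 1` stays strictly shorter or row `k` disappears. -/
def Addable (p : ℕ → ℕ) (k : ℕ) : Prop := k = 0 ∨ p k + 2 ≤ p (k - 1)

def Removable (p : ℕ → ℕ) (k : ℕ) : Prop := p (k + 1) + 2 ≤ p k ∨ p k = 1

lemma Removable.pos {p : ℕ → ℕ} {k : ℕ} (h : Removable p k) : 0 < p k := by
  rcases h with h | h <;> omega

lemma addable_succ_iff {p : ℕ → ℕ} {k : ℕ} : Addable p (k + 1) ↔ p (k + 1) + 2 ≤ p k := by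
  simp [Addable]

lemma addable_update_removable_iff (p : ℕ → ℕ) {k m : ℕ} (h : k ≠ m) :
    Addable p k ∧ Removable (update p k (p k + 1)) m ↔
      Removable p m ∧ Addable (update p m (p m - 1)) k := by
  rcases eq_or_ne k (m + 1) with rfl | h1
  · simp only [Addable, Removable, update_apply, Nat.add_sub_cancel]
    split_ifs <;> (try simp only [false_or]) <;> omega
  have : k - 1 = m → k = 0 ∧ m = 0 := by omega
  simp only [Addable, Removable, update_apply]
  split_ifs <;> omega

variable {lam : SPart} {k : ℕ}

lemma Addable.le_length (h : Addable lam.part k) : k ≤ lam.1.length := by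
  rcases h with h | h
  · omega
  · have := part_pos_iff.1 (by omega : 0 < lam.part (k - 1))
    omega

lemma Removable.lt_length (h : Removable lam.part k) : k < lam.1.length :=
  part_pos_iff.1 h.pos

lemma exists_part_eq_update_succ (h : Addable lam.part k) :
    ∃ kap : SPart, kap.part = update lam.part k (lam.part k + 1) := by
  refine exists_part_eq _ (fun j hj => ?_) ⟨lam.1.length + 1, ?_⟩
  · have hstep := fun h' => part_succ_lt (lam := lam) (k := j) h'
    simp only [update_apply] at hj ⊢
    split_ifs at hj ⊢ <;> subst_vars
    · omega
    · rcases h with h | h <;> simp_all; omega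
    · have := hstep hj; omega
    · exact hstep hj
  · rw [update_of_ne (by have := h.le_length; omega), part_of_length_le (by omega)]

lemma exists_part_eq_update_pred (h : Removable lam.part k) :
    ∃ mu : SPart, mu.part = update lam.part k (lam.part k - 1) := by
  refine exists_part_eq _ (fun j hj => ?_) ⟨lam.1.length, ?_⟩
  · have hstep := fun h' => part_succ_lt (lam := lam) (k := j) h'
    simp only [update_apply] at hj ⊢
    split_ifs at hj ⊢ <;> subst_vars
    · omega
    · have := hstep (by omega); omega
    · have := hstep hj; rcases h with h | h <;> omega
    · exact hstep hj
  · rw [update_of_ne (by have := h.lt_length; omega), part_of_length_le le_rfl]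

/- `up lam k` and `down lam k` default to `lam` when row `k` is not addable, resp. removable. -/
noncomputable def up (lam : SPart) (k : ℕ) : SPart :=
  if h : Addable lam.part k then (exists_part_eq_update_succ h).choose else lam

noncomputable def down (lam : SPart) (k : ℕ) : SPart :=
  if h : Removable lam.part k then (exists_part_eq_update_pred h).choose else lam

lemma part_up (h : Addable lam.part k) :
    (up lam k).part = update lam.part k (lam.part k + 1) := by
  rw [up, dif_pos h]
  exact (exists_part_eq_update_succ h).choose_spec

lemma part_down (h : Removable lam.part k) :
    (down lam k).part = update lam.part k (lam.part k - 1) := by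
  rw [down, dif_pos h]
  exact (exists_part_eq_update_pred h).choose_spec

lemma removable_up (h : Addable lam.part k) : Removable (up lam k).part k := by
  rw [part_up h, Removable, update_self, update_of_ne (by omega)]
  rcases Nat.eq_zero_or_pos (lam.part (k + 1)) with h0 | h0
  · omega
  · have := part_succ_lt h0; omega

lemma addable_down (h : Removable lam.part k) : Addable (down lam k).part k := by
  rcases Nat.eq_zero_or_pos k with rfl | hk
  · exact Or.inl rfl
  · obtain ⟨j, rfl⟩ : ∃ j, k = j + 1 := ⟨k - 1, by omega⟩
    rw [addable_succ_iff, part_down h, update_self, update_of_ne (by omega)]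
    have := h.pos
    have := part_succ_lt h.pos
    omega

lemma down_up (h : Addable lam.part k) : down (up lam k) k = lam :=
  part_injective <| by
    rw [part_down (removable_up h), part_up h, update_self, update_idem]
    simp

lemma up_down (h : Removable lam.part k) : up (down lam k) k = lam :=
  part_injective <| by
    rw [part_up (addable_down h), part_down h, update_self, update_idem,
      Nat.sub_add_cancel h.pos]
    simp

lemma up_injOn : {k | Addable lam.part k}.InjOn (up lam) := by
  intro x hx y hy hxy
  by_contra hne
  have := congrFun (congrArg part hxy) x
  rw [part_up hx, part_up hy, update_self, update_of_ne hne] at this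
  omega

lemma down_injOn : {k | Removable lam.part k}.InjOn (down lam) := by
  intro x hx y hy hxy
  by_contra hne
  have := congrFun (congrArg part hxy) x
  rw [part_down hx, part_down hy, update_self, update_of_ne hne] at this
  have := hx.pos
  omega

lemma down_up_comm {m : ℕ} (hkm : k ≠ m) (hk : Addable lam.part k)
    (hm : Removable (up lam k).part m) : down (up lam k) m = up (down lam m) k := by
  have hm' : Removable lam.part m := by
    rw [part_up hk] at hm
    exact ((addable_update_removable_iff _ hkm).1 ⟨hk, hm⟩).1
  have hk' : Addable (down lam m).part k := by
    rw [part_down hm']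
    exact ((addable_update_removable_iff _ hkm).1 ⟨hk, by rwa [← part_up hk]⟩).2
  apply part_injective
  rw [part_down hm, part_up hk', part_up hk, part_down hm', update_of_ne hkm.symm,
    update_of_ne hkm, update_comm hkm]

lemma length_up_le (h : Addable lam.part k) : (up lam k).1.length ≤ lam.1.length + 1 := by
  by_contra hc
  have h1 := part_pos_iff.2 (by omega : lam.1.length + 1 < (up lam k).1.length)
  rw [part_up h, update_of_ne (by have := h.le_length; omega),
    part_of_length_le (by omega)] at h1
  exact h1.false

lemma length_down_le (h : Removable lam.part k) : (down lam k).1.length ≤ lam.1.length := by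
  by_contra hc
  have h1 := part_pos_iff.2 (by omega : lam.1.length < (down lam k).1.length)
  rw [part_down h, update_of_ne (by have := h.lt_length; omega), part_of_length_le le_rfl] at h1
  exact h1.false

end Boxes

section Diagrams

lemma mem_diagram_iff {lam : SPart} {x : ℕ × ℕ} :
    x ∈ lam.diagram ↔ 1 ≤ x.1 ∧ x.1 ≤ x.2 ∧ x.2 < x.1 + lam.part (x.1 - 1) := by
  constructor
  · rintro ⟨k, h1, h2, h3⟩
    rw [h1, Nat.add_sub_cancel, part_of_lt k.2]
    exact ⟨by omega, by omega, by simpa using h3⟩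
  · rintro ⟨h1, h2, h3⟩
    have hk : x.1 - 1 < lam.1.length := part_pos_iff.1 (by omega)
    refine ⟨⟨x.1 - 1, hk⟩, by simp; omega, by simp; omega, ?_⟩
    simp only [List.get_eq_getElem, ← part_of_lt hk]
    omega

variable {mu lam : SPart} {b : ℕ × ℕ} {k : ℕ}

lemma AddBox.exists_addable (h : AddBox mu lam b) :
    ∃ k, Addable mu.part k ∧ b = (k + 1, k + 1 + mu.part k) ∧
      lam.part = update mu.part k (mu.part k + 1) := by
  obtain ⟨hnb, hd⟩ := h
  have hx : ∀ x : ℕ × ℕ, (1 ≤ x.1 ∧ x.1 ≤ x.2 ∧ x.2 < x.1 + lam.part (x.1 - 1)) ↔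
      (x = b ∨ (1 ≤ x.1 ∧ x.1 ≤ x.2 ∧ x.2 < x.1 + mu.part (x.1 - 1))) := fun x => by
    rw [← mem_diagram_iff, ← mem_diagram_iff, hd, Set.mem_insert_iff]
  have hb : b ∈ lam.diagram := by rw [hd]; exact Set.mem_insert _ _
  rw [mem_diagram_iff] at hb hnb
  obtain ⟨k, hk⟩ : ∃ k, b.1 = k + 1 := ⟨b.1 - 1, by omega⟩
  have hrow : ∀ r ≠ k, lam.part r = mu.part r := by
    intro r hr
    have h1 := hx (r + 1, r + 1 + lam.part r)
    have h2 := hx (r + 1, r + 1 + mu.part r)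
    simp only [Prod.ext_iff, Nat.add_sub_cancel] at h1 h2
    omega
  have hk1 := hx (k + 1, k + 1 + mu.part k)
  have hk2 := hx (k + 1, k + 1 + mu.part k + 1)
  simp only [Prod.ext_iff, Nat.add_sub_cancel] at hk1 hk2
  rw [hk, Nat.add_sub_cancel] at hb hnb
  have hpk : lam.part k = mu.part k + 1 := by omega
  refine ⟨k, ?_, Prod.ext hk (by simp; omega), funext fun r => ?_⟩
  · rcases Nat.eq_zero_or_pos k with h0 | hpos
    · exact Or.inl h0
    · obtain ⟨j, rfl⟩ : ∃ j, k = j + 1 := ⟨k - 1, by omega⟩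
      have := part_succ_lt (lam := lam) (k := j) (by omega)
      rw [addable_succ_iff, ← hrow j (by omega)]
      omega
  · rcases eq_or_ne r k with rfl | hr
    · rw [update_self, hpk]
    · rw [update_of_ne hr, hrow r hr]

lemma addBox_up (h : Addable mu.part k) : AddBox mu (up mu k) (k + 1, k + 1 + mu.part k) := by
  refine ⟨by rw [mem_diagram_iff]; simp, Set.ext fun ⟨x1, x2⟩ => ?_⟩
  rw [mem_diagram_iff, Set.mem_insert_iff, mem_diagram_iff, part_up h]
  simp only [Prod.ext_iff, update_apply]
  split_ifs with he
  · rw [← he]; omega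
  · omega

lemma addBox_iff :
    AddBox mu lam b ↔ ∃ k, Addable mu.part k ∧ b = (k + 1, k + 1 + mu.part k) ∧ lam = up mu k := by
  refine ⟨fun h => ?_, ?_⟩
  · obtain ⟨k, hk, hb, hpart⟩ := h.exists_addable
    exact ⟨k, hk, hb, part_injective (by rw [hpart, part_up hk])⟩
  · rintro ⟨k, hk, rfl, rfl⟩
    exact addBox_up hk

lemma covers_iff_exists_up : Covers mu lam ↔ ∃ k, Addable mu.part k ∧ lam = up mu k := by
  refine ⟨fun ⟨b, hb⟩ => ?_, fun ⟨k, hk, hlam⟩ => ⟨_, addBox_iff.2 ⟨k, hk, rfl, hlam⟩⟩⟩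
  obtain ⟨k, hk, -, hlam⟩ := addBox_iff.1 hb
  exact ⟨k, hk, hlam⟩

lemma addable_and_up_eq_iff :
    Addable mu.part k ∧ up mu k = lam ↔ Removable lam.part k ∧ down lam k = mu := by
  constructor
  · rintro ⟨h, rfl⟩
    exact ⟨removable_up h, down_up h⟩
  · rintro ⟨h, rfl⟩
    exact ⟨addable_down h, up_down h⟩

lemma covers_iff_exists_down : Covers mu lam ↔ ∃ k, Removable lam.part k ∧ mu = down lam k := by
  simp only [covers_iff_exists_up, eq_comm (a := lam), eq_comm (a := mu),
    addable_and_up_eq_iff]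

end Diagrams

section Weight

variable {lam : SPart} {k : ℕ}

lemma weight_eq_sum_range {N : ℕ} (hN : lam.1.length ≤ N) :
    lam.weight = ∑ k ∈ range N, lam.part k := by
  rw [weight, ← Fin.sum_univ_getElem, ← sum_subset (range_subset_range.2 hN)
    fun k _ hk => part_of_length_le (by simpa using hk), ← Fin.sum_univ_eq_sum_range]
  exact sum_congr rfl fun i _ => (part_of_lt i.2).symm

lemma weight_up (h : Addable lam.part k) : (up lam k).weight = lam.weight + 1 := by
  have hk : k ∈ range (lam.1.length + 2) := mem_range.2 (by have := h.le_length; omega)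
  rw [weight_eq_sum_range (N := lam.1.length + 2) (by have := length_up_le h; omega),
    weight_eq_sum_range (N := lam.1.length + 2) (by omega), part_up h,
    sum_update_of_mem hk, sum_eq_add_sum_sdiff_singleton_of_mem hk]
  omega

lemma weight_down (h : Removable lam.part k) : lam.weight = (down lam k).weight + 1 := by
  have hk : k ∈ range lam.1.length := mem_range.2 h.lt_length
  rw [weight_eq_sum_range (length_down_le h), weight_eq_sum_range le_rfl, part_down h,
    sum_update_of_mem hk, sum_eq_add_sum_sdiff_singleton_of_mem hk]
  have := h.pos
  omega

lemma weight_eq_zero_iff : lam.weight = 0 ↔ lam = empty := by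
  refine ⟨fun h => Subtype.ext ?_, fun h => h ▸ rfl⟩
  rw [weight, List.sum_eq_zero_iff] at h
  exact List.eq_nil_iff_forall_not_mem.2 fun x hx => (lam.2.2 x hx).ne' (h x hx)

lemma ne_empty_of_weight_pos (h : 0 < lam.weight) : lam ≠ empty :=
  fun he => h.ne' (weight_eq_zero_iff.2 he)

lemma removable_length_sub_one (h : lam ≠ empty) : Removable lam.part (lam.1.length - 1) := by
  have hlen : 0 < lam.1.length :=
    List.length_pos_iff.2 fun hl => h (Subtype.ext hl)
  have h1 : 0 < lam.part (lam.1.length - 1) := part_pos_iff.2 (by omega)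
  have h2 : lam.part (lam.1.length - 1 + 1) = 0 := part_of_length_le (by omega)
  unfold Removable
  omega

end Weight

section ContentIdentity

/-- The coefficient of `Û` at a box of content `c = j - i`. -/
noncomputable def boxWeight (α : ℂ) (c : ℕ) : ℂ :=
  (if c = 0 then (2 : ℂ)⁻¹ else 1) * (c * (c + 1) + α)

lemma boxWeight_zero (α : ℂ) : boxWeight α 0 = α / 2 := by
  simp [boxWeight, div_eq_inv_mul]

lemma boxWeight_succ (α : ℂ) (c : ℕ) :
    boxWeight α (c + 1) = boxWeight α c + 2 * (c + 1) + if c = 0 then α / 2 else 0 := by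
  rcases eq_or_ne c 0 with rfl | hc
  · simp [boxWeight]; ring
  · simp [boxWeight, hc]; ring

noncomputable def rowTerm (α : ℂ) (p : ℕ → ℕ) (k : ℕ) : ℂ :=
  (if Addable p k then boxWeight α (p k) else 0) -
    if Removable p k then boxWeight α (p k - 1) else 0

lemma rowTerm_add_two (α : ℂ) (p : ℕ → ℕ) (k : ℕ) :
    rowTerm α p (k + 2) = rowTerm α (fun j => p (j + 1)) (k + 1) := by
  simp only [rowTerm, addable_succ_iff]
  rfl

lemma rowTerm_zero_add_rowTerm_one (α : ℂ) {p : ℕ → ℕ} (hp : 0 < p 1 → p 1 < p 0) :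
    rowTerm α p 0 + rowTerm α p 1 = 2 * p 0 + rowTerm α (fun j => p (j + 1)) 0 := by
  have h0 : Addable p 0 := Or.inl rfl
  have h0' : Addable (fun j => p (j + 1)) 0 := Or.inl rfl
  simp only [rowTerm, if_pos h0, if_pos h0', addable_succ_iff, zero_add]
  change _ + ((if p 1 + 2 ≤ p 0 then _ else _) - if Removable p 1 then _ else _) =
    _ + (_ - if Removable p 1 then _ else _)
  have hrem : Removable p 0 ↔ p 1 + 2 ≤ p 0 ∨ p 0 = 1 := Iff.rfl
  by_cases h : p 1 + 2 ≤ p 0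
  · obtain ⟨c, hc⟩ : ∃ c, p 0 = c + 2 := ⟨p 0 - 2, by omega⟩
    rw [if_pos h, if_pos (hrem.2 (Or.inl h)), hc, show c + 2 - 1 = c + 1 by omega,
      boxWeight_succ, if_neg (by omega)]
    push_cast; ring
  · rw [if_neg h]
    rcases Nat.eq_zero_or_pos (p 1) with h1 | h1
    · rcases Nat.lt_or_ge (p 0) 1 with h00 | h00
      · rw [if_neg (by rw [hrem]; omega), h1, show p 0 = 0 by omega]
        push_cast; ring
      · rw [if_pos (hrem.2 (Or.inr (by omega))), h1, show p 0 = 0 + 1 by omega, boxWeight_succ,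
          boxWeight_zero]
        push_cast; ring
    · have he : p 0 = p 1 + 1 := by have := hp h1; omega
      rw [if_neg (by rw [hrem]; omega), he, boxWeight_succ, if_neg (by omega)]
      push_cast; ring

/-- The content identity behind `[D̂, Û] = H`. -/
lemma sum_rowTerm (α : ℂ) {p : ℕ → ℕ} (hp : ∀ k, 0 < p (k + 1) → p (k + 1) < p k) {N : ℕ}
    (hN : p N = 0) : ∑ k ∈ range (N + 1), rowTerm α p k = 2 * ∑ k ∈ range N, (p k : ℂ) + α / 2 := by
  induction N generalizing p with
  | zero =>
    have h0 : Addable p 0 := Or.inl rfl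
    have h0' : ¬ Removable p 0 := by unfold Removable; omega
    simp [rowTerm, h0, h0', hN, boxWeight_zero]
  | succ N ih =>
    have htail := ih (p := fun j => p (j + 1)) (fun k hk => hp (k + 1) hk) hN
    rw [sum_range_succ'] at htail
    rw [sum_range_succ', sum_range_succ', sum_range_succ' (fun k => (p k : ℂ))]
    simp only [rowTerm_add_two] at htail ⊢
    linear_combination htail + rowTerm_zero_add_rowTerm_one α (hp 0)

lemma sum_rowTerm_eq_weight (α : ℂ) (mu : SPart) :
    ∑ k ∈ range (mu.1.length + 2), rowTerm α mu.part k = 2 * mu.weight + α / 2 := by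
  rw [sum_rowTerm α (fun k => part_succ_lt) (part_of_length_le (by omega)),
    weight_eq_sum_range (N := mu.1.length + 1) (by omega)]
  push_cast
  rfl

end ContentIdentity

section OperatorSums

variable {lam mu : SPart}

lemma finsum_covers_eq_sum {M : Type*} [AddCommMonoid M] (g : SPart → M) {N : ℕ}
    (hN : lam.1.length < N) :
    ∑ᶠ kap ∈ {kap | Covers lam kap}, g kap =
      ∑ k ∈ range N, if Addable lam.part k then g (up lam k) else 0 := by
  have hset : {kap | Covers lam kap} = up lam '' {k | Addable lam.part k} := by
    ext kap
    simp [covers_iff_exists_up, eq_comm]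
  rw [hset, finsum_mem_image up_injOn,
    finsum_mem_setOf_eq_sum_range (N := N) fun k hk => by have := hk.le_length; omega]

lemma finsum_coveredBy_eq_sum {M : Type*} [AddCommMonoid M] (g : SPart → M) {N : ℕ}
    (hN : lam.1.length ≤ N) :
    ∑ᶠ mu ∈ {mu | Covers mu lam}, g mu =
      ∑ k ∈ range N, if Removable lam.part k then g (down lam k) else 0 := by
  have hset : {mu | Covers mu lam} = down lam '' {k | Removable lam.part k} := by
    ext mu
    simp [covers_iff_exists_down, eq_comm]
  rw [hset, finsum_mem_image down_injOn,
    finsum_mem_setOf_eq_sum_range (N := N) fun k hk => by have := hk.lt_length; omega]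

lemma DhatOp_apply (f : SPart → ℂ) {N : ℕ} (hN : mu.1.length < N) :
    DhatOp f mu = ∑ k ∈ range N, if Addable mu.part k then f (up mu k) else 0 := by
  have hset : {p : SPart × (ℕ × ℕ) | AddBox mu p.1 p.2} =
      (fun k => (up mu k, (k + 1, k + 1 + mu.part k))) '' {k | Addable mu.part k} := by
    ext ⟨kap, b⟩
    simp only [Set.mem_ofPred_eq, addBox_iff, Set.mem_image, Prod.ext_iff]
    exact exists_congr fun k => by tauto
  have hinj : Injective fun k => (up mu k, (k + 1, k + 1 + mu.part k)) :=
    fun x y h => by simpa using congrArg (·.2.1) h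
  change ∑ᶠ p ∈ {p : SPart × (ℕ × ℕ) | AddBox mu p.1 p.2}, f p.1 = _
  rw [hset, finsum_mem_image hinj.injOn,
    finsum_mem_setOf_eq_sum_range (N := N) fun k hk => by have := hk.le_length; omega]

lemma UhatOp_coeff_eq_boxWeight (α : ℂ) {i j : ℕ} (hij : i ≤ j) :
    (if j = i then (2 : ℂ)⁻¹ else 1) * (((j : ℂ) - i) * (((j : ℂ) - i) + 1) + α) =
      boxWeight α (j - i) := by
  obtain ⟨c, rfl⟩ := Nat.exists_eq_add_of_le hij
  simp [boxWeight]

lemma UhatOp_apply (α : ℂ) (f : SPart → ℂ) {kap : SPart} {N : ℕ} (hN : kap.1.length ≤ N) :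
    UhatOp α f kap = ∑ k ∈ range N,
      if Removable kap.part k then boxWeight α (kap.part k - 1) * f (down kap k) else 0 := by
  have hset : {p : SPart × (ℕ × ℕ) | AddBox p.1 kap p.2} =
      (fun k => (down kap k, (k + 1, k + kap.part k))) '' {k | Removable kap.part k} := by
    ext ⟨mu, b⟩
    simp only [Set.mem_ofPred_eq, addBox_iff, Set.mem_image, Prod.ext_iff]
    refine exists_congr fun k => ⟨fun ⟨hk, hb, hkap⟩ => ?_, fun ⟨hk, hmu, hb⟩ => ?_⟩
    · obtain ⟨hrem, hdown⟩ := addable_and_up_eq_iff.1 ⟨hk, hkap.symm⟩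
      refine ⟨hrem, hdown, ?_⟩
      rw [hkap, part_up hk, update_self]
      omega
    · obtain ⟨hadd, hup⟩ := addable_and_up_eq_iff.2 ⟨hk, hmu⟩
      refine ⟨hadd, ?_, hup.symm⟩
      rw [← hup, part_up hadd, update_self] at hb
      omega
  have hinj : Injective fun k => (down kap k, (k + 1, k + kap.part k)) :=
    fun x y h => by simpa using congrArg (·.2.1) h
  change ∑ᶠ p ∈ {p : SPart × (ℕ × ℕ) | AddBox p.1 kap p.2}, _ = _
  rw [hset, finsum_mem_image hinj.injOn,
    finsum_mem_setOf_eq_sum_range (N := N) fun k hk => by have := hk.lt_length; omega]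
  refine sum_congr rfl fun k _ => ?_
  by_cases hk : Removable kap.part k
  · have := hk.pos
    rw [if_pos hk, if_pos hk, UhatOp_coeff_eq_boxWeight α (by omega : k + 1 ≤ k + kap.part k),
      show k + kap.part k - (k + 1) = kap.part k - 1 by omega]
  · rw [if_neg hk, if_neg hk]

end OperatorSums

section Commutator

variable (α : ℂ) (f : SPart → ℂ) (mu : SPart)

noncomputable def upDownTerm (k m : ℕ) : ℂ :=
  if Addable mu.part k ∧ Removable (up mu k).part m then
    boxWeight α ((up mu k).part m - 1) * f (down (up mu k) m)
  else 0

noncomputable def downUpTerm (k m : ℕ) : ℂ :=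
  if Removable mu.part k ∧ Addable (down mu k).part m then
    boxWeight α (mu.part k - 1) * f (up (down mu k) m)
  else 0

lemma DhatOp_UhatOp_apply_eq_sum :
    DhatOp (UhatOp α f) mu = ∑ k ∈ range (mu.1.length + 2), ∑ m ∈ range (mu.1.length + 2),
      upDownTerm α f mu k m := by
  rw [DhatOp_apply (N := mu.1.length + 2) _ (by omega)]
  refine sum_congr rfl fun k _ => ?_
  by_cases hk : Addable mu.part k
  · rw [if_pos hk, UhatOp_apply (N := mu.1.length + 2) α f (by have := length_up_le hk; omega)]
    simp [upDownTerm, hk]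
  · simp [upDownTerm, hk]

lemma UhatOp_DhatOp_apply_eq_sum :
    UhatOp α (DhatOp f) mu = ∑ k ∈ range (mu.1.length + 2), ∑ m ∈ range (mu.1.length + 2),
      downUpTerm α f mu k m := by
  rw [UhatOp_apply (N := mu.1.length + 2) α _ (by omega)]
  refine sum_congr rfl fun k _ => ?_
  by_cases hk : Removable mu.part k
  · rw [if_pos hk, DhatOp_apply (N := mu.1.length + 2) _ (by have := length_down_le hk; omega),
      mul_sum]
    simp [downUpTerm, hk]
  · simp [downUpTerm, hk]

variable {α f mu}

lemma upDownTerm_eq_downUpTerm {k m : ℕ} (hkm : k ≠ m) :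
    upDownTerm α f mu k m = downUpTerm α f mu m k := by
  have hcross := addable_update_removable_iff mu.part hkm
  by_cases h : Addable mu.part k ∧ Removable (up mu k).part m
  · have hk := h.1
    rw [part_up hk] at h
    obtain ⟨hm, hk'⟩ := hcross.1 h
    rw [← part_down hm] at hk'
    rw [upDownTerm, downUpTerm, if_pos ⟨hk, by rw [part_up hk]; exact h.2⟩, if_pos ⟨hm, hk'⟩,
      down_up_comm hkm hk (by rw [part_up hk]; exact h.2), part_up hk, update_of_ne hkm.symm]
  · rw [upDownTerm, downUpTerm, if_neg h, if_neg]
    rintro ⟨hm, hk'⟩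
    rw [part_down hm] at hk'
    obtain ⟨hk, hm'⟩ := hcross.2 ⟨hm, hk'⟩
    exact h ⟨hk, by rwa [part_up hk]⟩

lemma upDownTerm_self (k : ℕ) :
    upDownTerm α f mu k k = (if Addable mu.part k then boxWeight α (mu.part k) else 0) * f mu := by
  by_cases hk : Addable mu.part k
  · rw [upDownTerm, if_pos ⟨hk, removable_up hk⟩, if_pos hk, down_up hk, part_up hk,
      update_self, Nat.add_sub_cancel]
  · rw [upDownTerm, if_neg (fun h => hk h.1), if_neg hk, zero_mul]

lemma downUpTerm_self (k : ℕ) :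
    downUpTerm α f mu k k =
      (if Removable mu.part k then boxWeight α (mu.part k - 1) else 0) * f mu := by
  by_cases hk : Removable mu.part k
  · rw [downUpTerm, if_pos ⟨hk, addable_down hk⟩, if_pos hk, up_down hk]
  · rw [downUpTerm, if_neg (fun h => hk h.1), if_neg hk, zero_mul]

variable (α f mu)

/-- The commutation relation `[D̂, Û] = H`. -/
theorem DhatOp_UhatOp_apply :
    DhatOp (UhatOp α f) mu = UhatOp α (DhatOp f) mu + (2 * mu.weight + α / 2) * f mu := by
  have h := sum_sum_sub_sum_diag_eq_of_swap (range (mu.1.length + 2))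
    fun k m hkm => upDownTerm_eq_downUpTerm (α := α) (f := f) (mu := mu) hkm
  simp only [upDownTerm_self, downUpTerm_self, ← sum_mul] at h
  rw [DhatOp_UhatOp_apply_eq_sum, UhatOp_DhatOp_apply_eq_sum, ← sum_rowTerm_eq_weight α mu]
  simp only [rowTerm, sum_sub_distrib]
  linear_combination h

end Commutator

section Iterates

lemma UhatOp_const_mul (α c : ℂ) (f : SPart → ℂ) (kap : SPart) :
    UhatOp α (fun lam => c * f lam) kap = c * UhatOp α f kap := by
  rw [UhatOp_apply α _ le_rfl, UhatOp_apply α _ le_rfl, mul_sum]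
  refine sum_congr rfl fun k _ => ?_
  split_ifs <;> ring

lemma UhatOp_zero (α : ℂ) : UhatOp α 0 = 0 := by
  funext kap
  simp [UhatOp_apply α _ le_rfl]

lemma UhatOp_iterate_apply_eq_zero (α : ℂ) {n : ℕ} {lam : SPart} (h : lam.weight ≠ n) :
    (UhatOp α)^[n] (deltaAt empty) lam = 0 := by
  induction n generalizing lam with
  | zero => exact if_neg fun he => h (weight_eq_zero_iff.2 he)
  | succ n ih =>
    rw [iterate_succ_apply', UhatOp_apply α _ le_rfl]
    refine sum_eq_zero fun k _ => ?_
    split_ifs with hk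
    · rw [ih (by have := weight_down hk; omega), mul_zero]
    · rfl

lemma DhatOp_deltaAt_empty : DhatOp (deltaAt empty) = 0 := by
  funext mu
  rw [DhatOp_apply _ (Nat.lt_add_one _)]
  refine sum_eq_zero fun k _ => ?_
  split_ifs with hk
  · exact if_neg (ne_empty_of_weight_pos (by rw [weight_up hk]; omega))
  · rfl

lemma DhatOp_UhatOp_iterate (α : ℂ) (n : ℕ) :
    DhatOp ((UhatOp α)^[n + 1] (deltaAt empty)) =
      fun lam => ((n + 1) * (n + α / 2)) * (UhatOp α)^[n] (deltaAt empty) lam := by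
  induction n with
  | zero =>
    funext lam
    rw [iterate_one, DhatOp_UhatOp_apply, DhatOp_deltaAt_empty, iterate_zero_apply]
    by_cases he : lam = empty
    · subst he
      simp [deltaAt, UhatOp_zero, weight_eq_zero_iff.2 rfl]
    · simp [deltaAt, he, UhatOp_zero]
  | succ n ih =>
    funext lam
    rw [iterate_succ_apply', DhatOp_UhatOp_apply, ih, UhatOp_const_mul,
      ← iterate_succ_apply' (UhatOp α), Nat.succ_eq_add_one]
    by_cases hw : lam.weight = n + 1
    · rw [hw]
      push_cast
      ring
    · rw [UhatOp_iterate_apply_eq_zero α hw]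
      ring

lemma DhatOp_add (f g : SPart → ℂ) : DhatOp (f + g) = DhatOp f + DhatOp g := by
  funext mu
  simp only [Pi.add_apply, DhatOp_apply _ (Nat.lt_add_one _), ← sum_add_distrib]
  refine sum_congr rfl fun k _ => ?_
  split_ifs <;> simp

lemma DhatOp_zero : DhatOp 0 = 0 := by
  funext mu
  simp [DhatOp_apply _ (Nat.lt_add_one _)]

noncomputable def DhatHom : AddMonoid.End (SPart → ℂ) where
  toFun := DhatOp
  map_zero' := DhatOp_zero
  map_add' := DhatOp_add

lemma DhatOp_iterate_sum {ι : Type*} (s : Finset ι) (g : ι → SPart → ℂ) (n : ℕ) :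
    DhatOp^[n] (∑ i ∈ s, g i) = ∑ i ∈ s, DhatOp^[n] (g i) := by
  have h := map_sum (DhatHom ^ n) g s
  rwa [AddMonoid.End.coe_pow] at h

lemma DhatOp_deltaAt (lam : SPart) :
    DhatOp (deltaAt lam) = ∑ k ∈ (range lam.1.length).filter (Removable lam.part),
      deltaAt (down lam k) := by
  funext mu
  set N := mu.1.length + lam.1.length + 1
  rw [DhatOp_apply (N := N) _ (by omega), Finset.sum_apply, sum_filter,
    sum_subset (range_subset_range.2 (by omega : lam.1.length ≤ N))
      fun k _ hk => if_neg fun h => hk (mem_range.2 h.lt_length)]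
  refine sum_congr rfl fun k _ => ?_
  simp only [deltaAt, ← ite_and, eq_comm (a := mu), addable_and_up_eq_iff]

end Iterates

section Dimension

def IsBranchingDim (d : SPart → ℕ) : Prop :=
  ∀ lam : SPart, lam ≠ empty → d lam = ∑ᶠ mu ∈ {mu : SPart | Covers mu lam}, d mu

variable {d : SPart → ℕ}

lemma dim_eq_sum_down
    (hrec : IsBranchingDim d) {lam : SPart} (h : lam ≠ empty) :
    d lam = ∑ k ∈ (range lam.1.length).filter (Removable lam.part), d (down lam k) := by
  rw [hrec lam h, finsum_coveredBy_eq_sum _ le_rfl, sum_filter]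

lemma dim_pos (h0 : d empty = 1)
    (hrec : IsBranchingDim d) (lam : SPart) : 0 < d lam := by
  induction hw : lam.weight generalizing lam with
  | zero => rw [weight_eq_zero_iff.1 hw, h0]; exact one_pos
  | succ n ih =>
    have hne := ne_empty_of_weight_pos (by omega : 0 < lam.weight)
    have hlast := removable_length_sub_one hne
    rw [dim_eq_sum_down hrec hne]
    refine sum_pos' (fun _ _ => Nat.zero_le _) ⟨_, mem_filter.2 ⟨?_, hlast⟩, ih _ ?_⟩
    · exact mem_range.2 hlast.lt_length
    · have := weight_down hlast; omega

theorem DhatOp_iterate_deltaAt_apply_empty (h0 : d empty = 1)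
    (hrec : IsBranchingDim d) (n : ℕ) (lam : SPart) :
    DhatOp^[n] (deltaAt lam) empty = if lam.weight = n then (d lam : ℂ) else 0 := by
  induction n generalizing lam with
  | zero =>
    by_cases he : lam = empty
    · subst he
      simp [deltaAt, h0, weight_eq_zero_iff]
    · simp [deltaAt, he, Ne.symm he, weight_eq_zero_iff]
  | succ n ih =>
    rw [iterate_succ_apply, DhatOp_deltaAt, DhatOp_iterate_sum, Finset.sum_apply]
    simp only [ih]
    by_cases hw : lam.weight = n + 1
    · have hne := ne_empty_of_weight_pos (by omega : 0 < lam.weight)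
      rw [if_pos hw, dim_eq_sum_down hrec hne, Nat.cast_sum]
      refine sum_congr rfl fun k hk => if_pos ?_
      have := weight_down (mem_filter.1 hk).2
      omega
    · rw [if_neg hw]
      refine sum_eq_zero fun k hk => if_neg ?_
      have := weight_down (mem_filter.1 hk).2
      omega

end Dimension

end SPart

open SPart Finset

lemma Zconst_succ (α : ℂ) (n : ℕ) :
    Zconst α (n + 1) = Zconst α n * ((n + 1) * (n + α / 2)) := by
  simp only [Zconst, ascPochhammer_succ_right, Nat.factorial_succ, Polynomial.eval_mul,
    Polynomial.eval_add, Polynomial.eval_X, Polynomial.eval_natCast]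
  push_cast
  ring

lemma Mmeas_of_weight_eq {d : SPart → ℕ} (h0 : d empty = 1)
    (hrec : IsBranchingDim d) (α : ℂ) {n : ℕ} {lam : SPart} (hw : lam.weight = n) :
    Mmeas α n lam = (Zconst α n)⁻¹ * d lam * (UhatOp α)^[n] (deltaAt empty) lam := by
  rw [Mmeas, DhatOp_iterate_deltaAt_apply_empty h0 hrec, if_pos hw]
  ring

/-- for `α ∉ {0,−2,−4,…}`, the measures `M_{α,n}` form a coherent
system: `M_n(λ) = Σ_{κ ↘ λ} M_{n+1}(κ) · dim_S(λ)/dim_S(κ)`, where `dim_S` is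
the number of saturated chains from `∅` in the Schur graph. -/
theorem statement6 (α : ℂ) (hα : ∀ k : ℕ, α ≠ -(2 * (k : ℂ)))
    (d : SPart → ℕ) (h0 : d SPart.empty = 1)
    (hrec : ∀ lam : SPart, lam ≠ SPart.empty →
      d lam = ∑ᶠ mu ∈ {mu : SPart | SPart.Covers mu lam}, d mu)
    (n : ℕ) (lam : SPart) (hw : lam.weight = n) :
    Mmeas α n lam =
      ∑ᶠ kap ∈ {kap : SPart | SPart.Covers lam kap},
        Mmeas α (n + 1) kap * ((d lam : ℂ) / (d kap : ℂ)) := by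
  have hc : ((n : ℂ) + 1) * (n + α / 2) ≠ 0 :=
    mul_ne_zero (Nat.cast_add_one_ne_zero n) fun h => hα n (by linear_combination 2 * h)
  have hterm : ∀ k, Addable lam.part k →
      Mmeas α (n + 1) (up lam k) * ((d lam : ℂ) / d (up lam k)) =
        (Zconst α (n + 1))⁻¹ * d lam * (UhatOp α)^[n + 1] (deltaAt empty) (up lam k) := by
    intro k hk
    have : (d (up lam k) : ℂ) ≠ 0 := Nat.cast_ne_zero.2 (dim_pos h0 hrec _).ne'
    rw [Mmeas_of_weight_eq h0 hrec α (by rw [weight_up hk, hw])]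
    field_simp
  rw [finsum_covers_eq_sum _ (Nat.lt_add_one _)]
  calc Mmeas α n lam
      = (Zconst α (n + 1))⁻¹ * d lam * DhatOp ((UhatOp α)^[n + 1] (deltaAt empty)) lam := by
        rw [DhatOp_UhatOp_iterate, Zconst_succ, mul_inv, Mmeas_of_weight_eq h0 hrec α hw]
        linear_combination
          (-(Zconst α n)⁻¹ * d lam * (UhatOp α)^[n] (deltaAt empty) lam) * inv_mul_cancel₀ hc
    _ = _ := by
        rw [DhatOp_apply _ (Nat.lt_add_one _), mul_sum]
        exact sum_congr rfl fun k _ => by split_ifs with hk <;> simp [hterm k, hk]
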